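/- arXiv:math/0409293 — 5 statements merged into one kernel-verified Lean document; each statement's English description precedes it below -/
import Mathlib

section
/- Let P and P' be two 2-planes in C^n that are ω-orthogonal (i.e., ω(u,v)=0 for all u in P, v in P'), where ω is the standard symplectic form on C^n. Let α(t) be a curve in P and β(t) a curve in P' satisfying ω(α(t), α'(t)) = ω(β(t), β'(t)) for all t. Then the surface F(t,s) = cos(s)·α(t) + sin(s)·β(t) is isotropic, i.e., the pullback of ω by F vanishes identically. -/
open Real

/-- The standard symplectic form on `ℂⁿ`: the imaginary part of the Hermitian inner product. -/
noncomputable def omegaCn (n : ℕ) (u v : EuclideanSpace ℂ (Fin n)) : ℝ :=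
  (inner ℂ u v : ℂ).im

/-!
Both partial derivatives of `F` lie in `P ⊕ P'`: `F_t = cos s • α' + sin s • β'` and
`F_s = -sin s • α + cos s • β`. Expanding `ω(F_t, F_s)` bilinearly, the mixed terms pair a vector
of `P` with one of `P'` and vanish, and by antisymmetry what is left is
`cos s · sin s · (ω(α, α') - ω(β, β'))`, which is zero by hypothesis.
-/

theorem Submodule.deriv_mem {𝕜 F : Type*} [NontriviallyNormedField 𝕜] [NormedAddCommGroup F]
    [NormedSpace 𝕜 F] (P : Submodule 𝕜 F) (hP : IsClosed (P : Set F)) {f : 𝕜 → F}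
    (hf : ∀ x, f x ∈ P) (x : 𝕜) : deriv f x ∈ P := by
  have hspan : Submodule.span 𝕜 (f '' Set.univ) ≤ P :=
    Submodule.span_le.mpr (Set.image_subset_iff.mpr fun y _ => hf y)
  exact closure_minimal hspan hP (range_deriv_subset_closure_span_image f dense_univ ⟨x, rfl⟩)

section omegaCn

variable {n : ℕ}

theorem omegaCn_add_left (u v w : EuclideanSpace ℂ (Fin n)) :
    omegaCn n (u + v) w = omegaCn n u w + omegaCn n v w := by
  simp only [omegaCn, inner_add_left, Complex.add_im]

theorem omegaCn_add_right (u v w : EuclideanSpace ℂ (Fin n)) :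
    omegaCn n u (v + w) = omegaCn n u v + omegaCn n u w := by
  simp only [omegaCn, inner_add_right, Complex.add_im]

theorem omegaCn_smul_left (r : ℝ) (u v : EuclideanSpace ℂ (Fin n)) :
    omegaCn n (r • u) v = r * omegaCn n u v := by
  rw [omegaCn, RCLike.real_smul_eq_coe_smul (K := ℂ), inner_smul_real_left, Complex.real_smul,
    Complex.im_ofReal_mul, omegaCn]

theorem omegaCn_smul_right (r : ℝ) (u v : EuclideanSpace ℂ (Fin n)) :
    omegaCn n u (r • v) = r * omegaCn n u v := by
  rw [omegaCn, RCLike.real_smul_eq_coe_smul (K := ℂ), inner_smul_real_right, Complex.real_smul,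
    Complex.im_ofReal_mul, omegaCn]

theorem omegaCn_swap (u v : EuclideanSpace ℂ (Fin n)) : omegaCn n v u = -omegaCn n u v := by
  rw [omegaCn, omegaCn, ← inner_conj_symm, Complex.conj_im]

theorem omegaCn_rotation_eq_zero (c d : ℝ) {a a' b b' : EuclideanSpace ℂ (Fin n)}
    (ha'b : omegaCn n a' b = 0) (hb'a : omegaCn n b' a = 0)
    (h : omegaCn n a a' = omegaCn n b b') :
    omegaCn n (c • a' + d • b') (-d • a + c • b) = 0 := by
  simp only [omegaCn_add_left, omegaCn_add_right, omegaCn_smul_left, omegaCn_smul_right,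
    ha'b, hb'a, omegaCn_swap a a', omegaCn_swap b b', h]
  ring

end omegaCn

theorem isotropic_of_cos_sin_combination_general
    (n : ℕ) (P P' : Submodule ℝ (EuclideanSpace ℂ (Fin n)))
    (horth : ∀ u ∈ P, ∀ v ∈ P', omegaCn n u v = 0)
    (α β : ℝ → EuclideanSpace ℂ (Fin n))
    (hα : Differentiable ℝ α) (hβ : Differentiable ℝ β)
    (hαP : ∀ t, α t ∈ P) (hβP' : ∀ t, β t ∈ P')
    (hω : ∀ t, omegaCn n (α t) (deriv α t) = omegaCn n (β t) (deriv β t))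
    (F : ℝ → ℝ → EuclideanSpace ℂ (Fin n))
    (hF : ∀ t s, F t s = Real.cos s • α t + Real.sin s • β t) :
    ∀ t s, omegaCn n (deriv (fun t' => F t' s) t) (deriv (fun s' => F t s') s) = 0 := by
  intro t s
  have hFt : HasDerivAt (fun t' => F t' s) (cos s • deriv α t + sin s • deriv β t) t := by
    simp only [hF]
    exact ((hα t).hasDerivAt.const_smul (cos s)).add ((hβ t).hasDerivAt.const_smul (sin s))
  have hFs : HasDerivAt (fun s' => F t s') (-sin s • α t + cos s • β t) s := by
    simp only [hF]
    exact ((hasDerivAt_cos s).smul_const _).add ((hasDerivAt_sin s).smul_const _)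
  rw [hFt.deriv, hFs.deriv]
  have hα' : deriv α t ∈ P := P.deriv_mem P.closed_of_finiteDimensional hαP t
  have hβ' : deriv β t ∈ P' := P'.deriv_mem P'.closed_of_finiteDimensional hβP' t
  refine omegaCn_rotation_eq_zero _ _ (horth _ hα' _ (hβP' t)) ?_ (hω t)
  rw [omegaCn_swap, horth _ (hαP t) _ hβ', neg_zero]

/-- If `P`, `P'` are ω-orthogonal 2-planes in `ℂⁿ`, `α` a curve in `P`,
`β` a curve in `P'` with `ω(α, α') = ω(β, β')`, then `F(t,s) = cos s • α t + sin s • β t`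
is isotropic: `ω(F_t, F_s) = 0` everywhere. -/
theorem isotropic_of_cos_sin_combination
    (n : ℕ) (P P' : Submodule ℝ (EuclideanSpace ℂ (Fin n)))
    (hP : Module.finrank ℝ P = 2) (hP' : Module.finrank ℝ P' = 2)
    (horth : ∀ u ∈ P, ∀ v ∈ P', omegaCn n u v = 0)
    (α β : ℝ → EuclideanSpace ℂ (Fin n))
    (hα : Differentiable ℝ α) (hβ : Differentiable ℝ β)
    (hαP : ∀ t, α t ∈ P) (hβP' : ∀ t, β t ∈ P')
    (hω : ∀ t, omegaCn n (α t) (deriv α t) = omegaCn n (β t) (deriv β t))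
    (F : ℝ → ℝ → EuclideanSpace ℂ (Fin n))
    (hF : ∀ t s, F t s = Real.cos s • α t + Real.sin s • β t) :
    ∀ t s, omegaCn n (deriv (fun t' => F t' s) t) (deriv (fun s' => F t s') s) = 0 :=
  isotropic_of_cos_sin_combination_general n P P' horth α β hα hβ hαP hβP' hω F hF
end

section
/- Define F(t,s) = (cos(s)·e^{it}, (sin(s)/√2)·e^{2it}) as a map from R^2 to C^2. Then the partial derivatives F_t and F_s are orthogonal (with respect to the real inner product on C^2 ≅ R^4) and satisfy |F_t|^2 = 2|F_s|^2 = 1 + sin^2(s). -/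
open Real Complex

noncomputable def Fmob (t s : ℝ) : ℂ × ℂ :=
  ((Real.cos s : ℂ) * Complex.exp (t * Complex.I),
   ((Real.sin s / Real.sqrt 2 : ℝ) : ℂ) * Complex.exp (2 * t * Complex.I))

noncomputable def hermC2 (u v : ℂ × ℂ) : ℂ :=
  starRingEnd ℂ u.1 * v.1 + starRingEnd ℂ u.2 * v.2

noncomputable def FmobT (t s : ℝ) : ℂ × ℂ := deriv (fun t' => Fmob t' s) t
noncomputable def FmobS (t s : ℝ) : ℂ × ℂ := deriv (fun s' => Fmob t s') s

lemma expI (c : ℂ) (t : ℝ) : HasDerivAt (fun t' : ℝ => Complex.exp (c * t' * Complex.I))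
    (c * Complex.I * Complex.exp (c * t * Complex.I)) t := by
  have h : HasDerivAt (fun z : ℂ => Complex.exp (c * z * Complex.I))
      (c * Complex.I * Complex.exp (c * t * Complex.I)) (t : ℂ) := by
    have := ((hasDerivAt_id (t:ℂ)).const_mul c |>.mul_const Complex.I).cexp
    simpa [mul_comm, mul_assoc, mul_left_comm] using this
  exact h.comp_ofReal

lemma FmobT_eq (t s : ℝ) : FmobT t s =
    ((Real.cos s : ℂ) * (Complex.I * Complex.exp (t * Complex.I)),
     ((Real.sin s / Real.sqrt 2 : ℝ) : ℂ) * (2 * Complex.I * Complex.exp (2 * t * Complex.I))) := by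
  have h1 : HasDerivAt (fun t' : ℝ => (Real.cos s : ℂ) * Complex.exp (t' * Complex.I))
      ((Real.cos s : ℂ) * (Complex.I * Complex.exp (t * Complex.I))) t := by
    have := (expI 1 t).const_mul (Real.cos s : ℂ)
    simpa using this
  have h2 : HasDerivAt (fun t' : ℝ => ((Real.sin s / Real.sqrt 2 : ℝ) : ℂ) * Complex.exp (2 * t' * Complex.I))
      (((Real.sin s / Real.sqrt 2 : ℝ) : ℂ) * (2 * Complex.I * Complex.exp (2 * t * Complex.I))) t := by
    have := (expI 2 t).const_mul ((Real.sin s / Real.sqrt 2 : ℝ) : ℂ)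
    simpa using this
  exact (HasDerivAt.prodMk h1 h2).deriv

lemma FmobS_eq (t s : ℝ) : FmobS t s =
    ((-Real.sin s : ℂ) * Complex.exp (t * Complex.I),
     ((Real.cos s / Real.sqrt 2 : ℝ) : ℂ) * Complex.exp (2 * t * Complex.I)) := by
  have h1 : HasDerivAt (fun s' : ℝ => (Real.cos s' : ℂ) * Complex.exp (t * Complex.I))
      ((-Real.sin s : ℂ) * Complex.exp (t * Complex.I)) s := by
    have := ((Real.hasDerivAt_cos s).ofReal_comp).mul_const (Complex.exp (t * Complex.I))
    simpa using this
  have h2 : HasDerivAt (fun s' : ℝ => ((Real.sin s' / Real.sqrt 2 : ℝ) : ℂ) * Complex.exp (2 * t * Complex.I))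
      (((Real.cos s / Real.sqrt 2 : ℝ) : ℂ) * Complex.exp (2 * t * Complex.I)) s := by
    have hd : HasDerivAt (fun s' : ℝ => Real.sin s' / Real.sqrt 2) (Real.cos s / Real.sqrt 2) s :=
      (Real.hasDerivAt_sin s).div_const _
    have := hd.ofReal_comp.mul_const (Complex.exp (2 * t * Complex.I))
    simpa using this
  exact (HasDerivAt.prodMk h1 h2).deriv

/-- `F_t ⊥ F_s` and `|F_t|² = 2|F_s|² = 1 + sin² s`. -/
theorem Fmob_derivs_orthogonal_and_norms (t s : ℝ) :
    (hermC2 (FmobT t s) (FmobS t s)).re = 0 ∧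
    (hermC2 (FmobT t s) (FmobT t s)).re = 2 * (hermC2 (FmobS t s) (FmobS t s)).re ∧
    (hermC2 (FmobT t s) (FmobT t s)).re = 1 + Real.sin s ^ 2 := by
  have h2 : Real.sqrt 2 ^ 2 = 2 := Real.sq_sqrt (by norm_num)
  have hpy := Real.sin_sq_add_cos_sq s
  have hs2 : (Real.sqrt 2 : ℝ) ≠ 0 := by positivity
  have hexp : ∀ x : ℝ, Complex.exp ((x : ℂ) * Complex.I)
      = ((Real.cos x : ℝ) : ℂ) + ((Real.sin x : ℝ) : ℂ) * Complex.I := fun x => by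
    rw [Complex.exp_mul_I, ← Complex.ofReal_cos, ← Complex.ofReal_sin]
  have hc : (2 : ℂ) * (t : ℂ) = ((2 * t : ℝ) : ℂ) := by push_cast; ring
  rw [FmobT_eq, FmobS_eq, hc, hexp, hexp]
  simp only [hermC2, map_add, map_mul, map_neg, map_ofNat, Complex.conj_I, Complex.conj_ofReal,
    Complex.add_re, Complex.add_im, Complex.mul_re, Complex.mul_im,
    Complex.ofReal_re, Complex.ofReal_im, Complex.I_re, Complex.I_im,
    Complex.re_ofNat, Complex.im_ofNat, Complex.sin_ofReal_re, Complex.sin_ofReal_im, Complex.cos_ofReal_re, Complex.cos_ofReal_im, Complex.neg_re, Complex.neg_im, Complex.ofReal_neg]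
  have hinv : ((Real.sqrt 2)⁻¹ : ℝ) ^ 2 = 1/2 := by rw [inv_pow, h2]; norm_num
  have e1 := Real.sin_sq_add_cos_sq t
  have e2 := Real.sin_sq_add_cos_sq (2*t)
  refine ⟨?_, ?_, ?_⟩
  · nlinarith [hpy, h2, e1, e2]
  · linear_combination (Real.cos s^2 - 2*Real.sin s^2) * e1
      + ((Real.sqrt 2)⁻¹^2 * (-2*Real.cos s^2 + 4*Real.sin s^2)) * e2
      + (-2*Real.cos s^2 + 4*Real.sin s^2) * hinv
  · linear_combination Real.cos s^2 * e1 + (4*Real.sin s^2*(Real.sqrt 2)⁻¹^2) * e2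
      + 4*Real.sin s^2 * hinv + hpy
end

section
/- Let λ > 0 and suppose I: {bounded piecewise-smooth regions in a plane P} → R≥0 satisfies: (i) I is subadditive under decomposition of a region into finitely many pieces, (ii) monotone under inclusion in the sense I(D₁) ≤ I(D) + I(D₁ \ D) for D ⊂ D₁, (iii) I is invariant under translations of P and scales as I(rD) = r²I(D), and (iv) I(D₁) = λ for the unit square D₁. If moreover I(D) ≤ 17C·Area(D) for some constant C and all D, then I(D) = λ·Area(D) for every bounded region D with piecewise smooth boundary. -/
open MeasureTheory
section AuxAreaFunctional
open Set

def gsq (n : ℕ) (p : ℤ × ℤ) : Set (ℝ × ℝ) :=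
  Set.Ico ((p.1 : ℝ)/2^n) (((p.1:ℝ)+1)/2^n) ×ˢ Set.Ico ((p.2 : ℝ)/2^n) (((p.2:ℝ)+1)/2^n)

noncomputable def gidx (n : ℕ) (x : ℝ × ℝ) : ℤ × ℤ := (⌊x.1 * 2^n⌋, ⌊x.2 * 2^n⌋)

lemma mem_dyadic_Ico {n : ℕ} {i : ℤ} {x : ℝ} :
    x ∈ Set.Ico ((i:ℝ)/2^n) (((i:ℝ)+1)/2^n) ↔ ⌊x * 2^n⌋ = i := by
  have h2 : (0:ℝ) < 2^n := by positivity
  rw [Set.mem_Ico, div_le_iff₀ h2, lt_div_iff₀ h2, Int.floor_eq_iff]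


lemma mem_gsq {n : ℕ} {p : ℤ×ℤ} {x : ℝ×ℝ} : x ∈ gsq n p ↔ gidx n x = p := by
  simp only [gsq, Set.mem_prod, mem_dyadic_Ico, gidx, Prod.ext_iff]

lemma mem_gsq_self (n : ℕ) (x : ℝ×ℝ) : x ∈ gsq n (gidx n x) := mem_gsq.mpr rfl

lemma gsq_disjoint {n : ℕ} {p q : ℤ×ℤ} (h : p ≠ q) : Disjoint (gsq n p) (gsq n q) := by
  rw [Set.disjoint_left]; intro x hp hq
  exact h ((mem_gsq.mp hp).symm.trans (mem_gsq.mp hq))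

lemma floor_half (r : ℝ) : ⌊r / 2⌋ = ⌊r⌋ / 2 := by
  have h1 : (⌊r⌋ : ℝ) ≤ r := Int.floor_le r
  have h2 : r < ⌊r⌋ + 1 := Int.lt_floor_add_one r
  rw [Int.floor_eq_iff]
  constructor
  · have h : (2 * (⌊r⌋ / 2) : ℤ) ≤ ⌊r⌋ := by omega
    have : 2 * ((⌊r⌋/2 : ℤ):ℝ) ≤ (⌊r⌋:ℝ) := by exact_mod_cast h
    linarith
  · have h : (⌊r⌋ : ℤ) + 1 ≤ 2 * (⌊r⌋ / 2) + 2 := by omega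
    have : ((⌊r⌋:ℝ) + 1) ≤ 2 * ((⌊r⌋/2 : ℤ):ℝ) + 2 := by exact_mod_cast h
    linarith

lemma gidx_succ (n : ℕ) (x : ℝ×ℝ) : gidx n x = ((gidx (n+1) x).1 / 2, (gidx (n+1) x).2 / 2) := by
  have key : ∀ y : ℝ, ⌊y * 2^n⌋ = ⌊y * 2^(n+1)⌋ / 2 := fun y => by
    rw [← floor_half]; congr 1; ring
  simp only [gidx, key]

lemma gsq_succ_subset (n : ℕ) (x : ℝ×ℝ) : gsq (n+1) (gidx (n+1) x) ⊆ gsq n (gidx n x) := by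
  intro y hy
  rw [mem_gsq] at hy ⊢
  rw [gidx_succ n y, gidx_succ n x, hy]

lemma measurableSet_gsq (n : ℕ) (p : ℤ×ℤ) : MeasurableSet (gsq n p) :=
  measurableSet_Ico.prod measurableSet_Ico

lemma volume_gsq (n : ℕ) (p : ℤ×ℤ) : volume (gsq n p) = ENNReal.ofReal ((1/2^n) * (1/2^n)) := by
  have h2 : (0:ℝ) < 2^n := by positivity
  have hlen : ∀ i : ℤ, ((i:ℝ)+1)/2^n - (i:ℝ)/2^n = 1/2^n := fun i => by field_simp; ring
  rw [gsq, Measure.volume_eq_prod, Measure.prod_prod, Real.volume_Ico, Real.volume_Ico, hlen, hlen,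
    ← ENNReal.ofReal_mul (show (0:ℝ) ≤ 1/2^n by positivity)]

lemma toReal_volume_gsq (n : ℕ) (p : ℤ×ℤ) : (volume (gsq n p)).toReal = (1/2^n)^2 := by
  have h : (0:ℝ) ≤ (1/2^n) * (1/2^n) := by positivity
  rw [volume_gsq, ENNReal.toReal_ofReal h]; ring

lemma gsq_corner_mem (n : ℕ) (p : ℤ×ℤ) : ((p.1:ℝ)/2^n, (p.2:ℝ)/2^n) ∈ gsq n p := by
  have h2 : (0:ℝ) < 2^n := by positivity
  have h3 : ∀ i : ℤ, (i:ℝ)/2^n < ((i:ℝ)+1)/2^n := fun i => by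
    apply div_lt_div_of_pos_right (by linarith) h2
  exact ⟨⟨le_refl _, h3 p.1⟩, ⟨le_refl _, h3 p.2⟩⟩

lemma sq_image_Icc (a b r : ℝ) (hr : 0 < r) :
    (fun p : ℝ×ℝ => p + (a,b)) '' ((fun p : ℝ×ℝ => r • p) '' (Set.Icc 0 1 ×ˢ Set.Icc 0 1)) =
      Set.Icc a (a+r) ×ˢ Set.Icc b (b+r) := by
  rw [Set.image_image]
  have h : (fun p : ℝ×ℝ => r • p + (a, b)) = fun p : ℝ×ℝ => (r * p.1 + a, r * p.2 + b) := rfl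
  rw [h, show (fun p : ℝ×ℝ => (r * p.1 + a, r * p.2 + b)) '' (Set.Icc 0 1 ×ˢ Set.Icc 0 1) =
      ((fun x => r*x+a) '' Set.Icc 0 1) ×ˢ ((fun x => r*x+b) '' Set.Icc 0 1) from
      (Set.prod_image_image_eq (m₁ := fun x => r*x+a) (m₂ := fun x => r*x+b)).symm, Set.image_affine_Icc' hr, Set.image_affine_Icc' hr]
  norm_num [add_comm]

lemma sq_image_Ico (a b r : ℝ) (hr : 0 < r) :
    (fun p : ℝ×ℝ => p + (a,b)) '' ((fun p : ℝ×ℝ => r • p) '' (Set.Ico 0 1 ×ˢ Set.Ico 0 1)) =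
      Set.Ico a (a+r) ×ˢ Set.Ico b (b+r) := by
  rw [Set.image_image]
  have h : (fun p : ℝ×ℝ => r • p + (a, b)) = fun p : ℝ×ℝ => (r * p.1 + a, r * p.2 + b) := rfl
  rw [h, show (fun p : ℝ×ℝ => (r * p.1 + a, r * p.2 + b)) '' (Set.Ico 0 1 ×ˢ Set.Ico 0 1) =
      ((fun x => r*x+a) '' Set.Ico 0 1) ×ˢ ((fun x => r*x+b) '' Set.Ico 0 1) from
      (Set.prod_image_image_eq (m₁ := fun x => r*x+a) (m₂ := fun x => r*x+b)).symm, Set.image_affine_Ico hr, Set.image_affine_Ico hr]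
  norm_num [add_comm]

lemma vol_Icc_sq (a b r : ℝ) (hr : 0 ≤ r) :
    volume (Set.Icc a (a+r) ×ˢ Set.Icc b (b+r)) = ENNReal.ofReal (r^2) := by
  rw [Measure.volume_eq_prod, Measure.prod_prod, Real.volume_Icc, Real.volume_Icc,
    add_sub_cancel_left, add_sub_cancel_left, ← ENNReal.ofReal_mul hr, ← sq]

lemma vol_Ico_sq (a b r : ℝ) (hr : 0 ≤ r) :
    volume (Set.Ico a (a+r) ×ˢ Set.Ico b (b+r)) = ENNReal.ofReal (r^2) := by
  rw [Measure.volume_eq_prod, Measure.prod_prod, Real.volume_Ico, Real.volume_Ico,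
    add_sub_cancel_left, add_sub_cancel_left, ← ENNReal.ofReal_mul hr, ← sq]

section Ivals
variable {lam C : ℝ} {I : Set (ℝ × ℝ) → ℝ}

lemma Inull (hI0 : ∀ D, 0 ≤ I D) (hbound : ∀ D, I D ≤ 17 * C * (volume D).toReal)
    {N : Set (ℝ×ℝ)} (hN : volume N = 0) : I N = 0 := by
  have := hbound N
  rw [hN] at this
  simp at this
  exact le_antisymm this (hI0 N)

lemma I_closed_sq (htrans : ∀ (D : Set (ℝ × ℝ)) (v : ℝ × ℝ), I ((fun p => p + v) '' D) = I D)
    (hscale : ∀ (D : Set (ℝ × ℝ)) (r : ℝ), 0 < r → I ((fun p => r • p) '' D) = r ^ 2 * I D)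
    (hunit : I (Set.Icc (0:ℝ) 1 ×ˢ Set.Icc (0:ℝ) 1) = lam)
    (a b r : ℝ) (hr : 0 < r) : I (Set.Icc a (a+r) ×ˢ Set.Icc b (b+r)) = r^2 * lam := by
  rw [← sq_image_Icc a b r hr, htrans, hscale _ r hr, hunit]

lemma I_s0 (hlam : 0 < lam)
    (hI0 : ∀ D, 0 ≤ I D)
    (hmono : ∀ D D₁ : Set (ℝ × ℝ), D ⊆ D₁ → I D₁ ≤ I D + I (D₁ \ D))
    (htrans : ∀ (D : Set (ℝ × ℝ)) (v : ℝ × ℝ), I ((fun p => p + v) '' D) = I D)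
    (hscale : ∀ (D : Set (ℝ × ℝ)) (r : ℝ), 0 < r → I ((fun p => r • p) '' D) = r ^ 2 * I D)
    (hunit : I (Set.Icc (0:ℝ) 1 ×ˢ Set.Icc (0:ℝ) 1) = lam)
    (hbound : ∀ D, I D ≤ 17 * C * (volume D).toReal) :
    I (Set.Ico (0:ℝ) 1 ×ˢ Set.Ico (0:ℝ) 1) = lam := by
  have hvolK : volume (Set.Icc (0:ℝ) 1 ×ˢ Set.Icc (0:ℝ) 1) = 1 := by
    have h := vol_Icc_sq 0 0 1 zero_le_one
    rw [zero_add, show (1:ℝ)^2 = 1 by norm_num, ENNReal.ofReal_one] at h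
    exact h
  have hvols0 : volume (Set.Ico (0:ℝ) 1 ×ˢ Set.Ico (0:ℝ) 1) = 1 := by
    have h := vol_Ico_sq 0 0 1 zero_le_one
    rw [zero_add, show (1:ℝ)^2 = 1 by norm_num, ENNReal.ofReal_one] at h
    exact h
  have hc17 : 0 < 17 * C := by
    have h := hbound (Set.Icc (0:ℝ) 1 ×ˢ Set.Icc (0:ℝ) 1)
    rw [hunit, hvolK] at h
    simp at h
    linarith
  have hsub0 : (Set.Ico (0:ℝ) 1 ×ˢ Set.Ico (0:ℝ) 1) ⊆ (Set.Icc (0:ℝ) 1 ×ˢ Set.Icc (0:ℝ) 1) :=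
    Set.prod_mono Set.Ico_subset_Icc_self Set.Ico_subset_Icc_self
  have hmeas_s0 : MeasurableSet (Set.Ico (0:ℝ) 1 ×ˢ Set.Ico (0:ℝ) 1) :=
    measurableSet_Ico.prod measurableSet_Ico
  have hdiff0 : volume ((Set.Icc (0:ℝ) 1 ×ˢ Set.Icc (0:ℝ) 1) \ (Set.Ico (0:ℝ) 1 ×ˢ Set.Ico (0:ℝ) 1)) = 0 := by
    rw [measure_diff hsub0 hmeas_s0.nullMeasurableSet (by rw [hvols0]; exact ENNReal.one_ne_top),
      hvolK, hvols0, tsub_self]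
  have hlow : lam ≤ I (Set.Ico (0:ℝ) 1 ×ˢ Set.Ico (0:ℝ) 1) := by
    have h := hmono _ _ hsub0
    rw [hunit, Inull hI0 hbound hdiff0] at h
    linarith
  have hupp : I (Set.Ico (0:ℝ) 1 ×ˢ Set.Ico (0:ℝ) 1) ≤ lam := by
    refine le_of_forall_pos_le_add fun η hη => ?_
    set ε : ℝ := min (1/2) (η / (2 * (17*C))) with hε
    have hε0 : 0 < ε := lt_min (by norm_num) (by positivity)
    have hε1 : ε ≤ 1/2 := min_le_left _ _
    have hεη : ε ≤ η / (2 * (17*C)) := min_le_right _ _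
    have hr : 0 < 1 - ε := by linarith
    have hICε : I (Set.Icc (0:ℝ) (1-ε) ×ˢ Set.Icc (0:ℝ) (1-ε)) = (1-ε)^2 * lam := by
      have h := I_closed_sq htrans hscale hunit 0 0 (1-ε) hr
      rwa [zero_add] at h
    have hCsub : (Set.Icc (0:ℝ) (1-ε) ×ˢ Set.Icc (0:ℝ) (1-ε)) ⊆ (Set.Ico (0:ℝ) 1 ×ˢ Set.Ico (0:ℝ) 1) :=
      Set.prod_mono (Set.Icc_subset_Ico_right (by linarith)) (Set.Icc_subset_Ico_right (by linarith))
    have hvolCε : volume (Set.Icc (0:ℝ) (1-ε) ×ˢ Set.Icc (0:ℝ) (1-ε)) = ENNReal.ofReal ((1-ε)^2) := by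
      have h := vol_Icc_sq 0 0 (1-ε) hr.le
      rwa [zero_add] at h
    have hvoldiff : volume ((Set.Ico (0:ℝ) 1 ×ˢ Set.Ico (0:ℝ) 1) \ (Set.Icc (0:ℝ) (1-ε) ×ˢ Set.Icc (0:ℝ) (1-ε)))
        ≤ ENNReal.ofReal (2*ε) := by
      rw [measure_diff hCsub (measurableSet_Icc.prod measurableSet_Icc).nullMeasurableSet
        (by rw [hvolCε]; exact ENNReal.ofReal_ne_top), hvols0, hvolCε]
      rw [tsub_le_iff_right, ← ENNReal.ofReal_add (by positivity) (by positivity)]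
      rw [show ((1:ENNReal)) = ENNReal.ofReal 1 from (ENNReal.ofReal_one).symm]
      exact ENNReal.ofReal_le_ofReal (by nlinarith)
    have hIdiff : I ((Set.Ico (0:ℝ) 1 ×ˢ Set.Ico (0:ℝ) 1) \ (Set.Icc (0:ℝ) (1-ε) ×ˢ Set.Icc (0:ℝ) (1-ε)))
        ≤ 17*C*(2*ε) := by
      refine (hbound _).trans ?_
      have h1 : (volume ((Set.Ico (0:ℝ) 1 ×ˢ Set.Ico (0:ℝ) 1) \ (Set.Icc (0:ℝ) (1-ε) ×ˢ Set.Icc (0:ℝ) (1-ε)))).toReal ≤ 2*ε :=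
        ENNReal.toReal_le_of_le_ofReal (by positivity) hvoldiff
      exact mul_le_mul_of_nonneg_left h1 hc17.le
    have hm := hmono _ _ hCsub
    have h2 : 17*C*(2*ε) ≤ η := by
      rw [le_div_iff₀ (show (0:ℝ) < 2*(17*C) by positivity)] at hεη
      linarith [show 17*C*(2*ε) = ε*(2*(17*C)) by ring]
    have h3 : (1-ε)^2 * lam ≤ lam := by
      have h4 : (1-ε)^2 ≤ 1 := by nlinarith [hε0, hr]
      nlinarith [mul_le_mul_of_nonneg_right h4 hlam.le]
    linarith
  linarith

end Ivals

open Filter Topology in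
lemma pairwise_disjoint_cons {m : ℕ} (A : Set (ℝ×ℝ)) (g : Fin m → Set (ℝ×ℝ))
    (h1 : Pairwise (Function.onFun Disjoint g)) (h2 : ∀ k, Disjoint A (g k)) :
    Pairwise (Function.onFun Disjoint (Fin.cons A g : Fin (m+1) → Set (ℝ×ℝ))) := by
  intro i j hij
  rcases Fin.eq_zero_or_eq_succ i with rfl | ⟨k, rfl⟩ <;>
    rcases Fin.eq_zero_or_eq_succ j with rfl | ⟨l, rfl⟩
  · exact absurd rfl hij
  · simpa [Function.onFun] using h2 l
  · simpa [Function.onFun] using (h2 k).symm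
  · have hkl : k ≠ l := fun h => hij (by rw [h])
    simpa [Function.onFun] using h1 hkl

lemma gsq_dist {n : ℕ} {x y : ℝ×ℝ} (h : y ∈ gsq n (gidx n x)) : dist y x < 1/2^n := by
  have hx := mem_gsq_self n x
  have h2 : (0:ℝ) < 2^n := by positivity
  obtain ⟨⟨hy1, hy1'⟩, hy2, hy2'⟩ := h
  obtain ⟨⟨hx1, hx1'⟩, hx2, hx2'⟩ := hx
  have hlen : ∀ i : ℤ, ((i:ℝ)+1)/2^n - (i:ℝ)/2^n = 1/2^n := fun i => by field_simp; ring
  rw [Prod.dist_eq, max_lt_iff, Real.dist_eq, Real.dist_eq, abs_sub_lt_iff, abs_sub_lt_iff]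
  have l1 := hlen (gidx n x).1
  have l2 := hlen (gidx n x).2
  constructor <;> constructor <;> linarith

lemma c17_pos {lam C : ℝ} {I : Set (ℝ × ℝ) → ℝ} (hlam : 0 < lam)
    (hunit : I (Set.Icc (0:ℝ) 1 ×ˢ Set.Icc (0:ℝ) 1) = lam)
    (hbound : ∀ D, I D ≤ 17 * C * (volume D).toReal) : 0 < 17 * C := by
  have hvolK : volume (Set.Icc (0:ℝ) 1 ×ˢ Set.Icc (0:ℝ) 1) = 1 := by
    have h := vol_Icc_sq 0 0 1 zero_le_one
    rw [zero_add, show (1:ℝ)^2 = 1 by norm_num, ENNReal.ofReal_one] at h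
    exact h
  have h := hbound (Set.Icc (0:ℝ) 1 ×ˢ Set.Icc (0:ℝ) 1)
  rw [hunit, hvolK] at h
  simp at h
  linarith

lemma I_gsq {lam C : ℝ} {I : Set (ℝ × ℝ) → ℝ} (hlam : 0 < lam)
    (hI0 : ∀ D, 0 ≤ I D)
    (hmono : ∀ D D₁ : Set (ℝ × ℝ), D ⊆ D₁ → I D₁ ≤ I D + I (D₁ \ D))
    (htrans : ∀ (D : Set (ℝ × ℝ)) (v : ℝ × ℝ), I ((fun p => p + v) '' D) = I D)
    (hscale : ∀ (D : Set (ℝ × ℝ)) (r : ℝ), 0 < r → I ((fun p => r • p) '' D) = r ^ 2 * I D)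
    (hunit : I (Set.Icc (0:ℝ) 1 ×ˢ Set.Icc (0:ℝ) 1) = lam)
    (hbound : ∀ D, I D ≤ 17 * C * (volume D).toReal)
    (n : ℕ) (p : ℤ×ℤ) : I (gsq n p) = lam * (volume (gsq n p)).toReal := by
  have h2 : (0:ℝ) < (1:ℝ)/2^n := by positivity
  have hrepr : gsq n p = Set.Ico ((p.1:ℝ)/2^n) ((p.1:ℝ)/2^n + 1/2^n) ×ˢ
      Set.Ico ((p.2:ℝ)/2^n) ((p.2:ℝ)/2^n + 1/2^n) := by
    rw [gsq]
    congr 1 <;> congr 1 <;> field_simp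
  rw [toReal_volume_gsq, hrepr, ← sq_image_Ico _ _ _ h2, htrans, hscale _ _ h2,
    I_s0 hlam hI0 hmono htrans hscale hunit hbound]
  ring

open Filter Topology in
lemma Iupper (lam C : ℝ) (I : Set (ℝ × ℝ) → ℝ) (hlam : 0 < lam)
    (hI0 : ∀ D, 0 ≤ I D)
    (hsub : ∀ (D : Set (ℝ × ℝ)) (m : ℕ) (f : Fin m → Set (ℝ × ℝ)),
      (⋃ i, f i) = D → Pairwise (Function.onFun Disjoint f) → I D ≤ ∑ i, I (f i))
    (hmono : ∀ D D₁ : Set (ℝ × ℝ), D ⊆ D₁ → I D₁ ≤ I D + I (D₁ \ D))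
    (htrans : ∀ (D : Set (ℝ × ℝ)) (v : ℝ × ℝ), I ((fun p => p + v) '' D) = I D)
    (hscale : ∀ (D : Set (ℝ × ℝ)) (r : ℝ), 0 < r → I ((fun p => r • p) '' D) = r ^ 2 * I D)
    (hunit : I (Set.Icc (0:ℝ) 1 ×ˢ Set.Icc (0:ℝ) 1) = lam)
    (hbound : ∀ D : Set (ℝ × ℝ), I D ≤ 17 * C * (volume D).toReal) :
    ∀ D : Set (ℝ × ℝ), Bornology.IsBounded D → MeasurableSet D →
      volume (frontier D) = 0 → I D ≤ lam * (volume D).toReal := by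
  intro D hDb hDm hDf
  classical
  have hvolD : volume D ≠ ⊤ := hDb.measure_lt_top.ne
  have hc17 : 0 < 17 * C := c17_pos hlam hunit hbound
  set S : ℕ → Set (ℝ×ℝ) := fun n => {x | gsq n (gidx n x) ⊆ D} with hS
  have hSsubD : ∀ n, S n ⊆ D := fun n x hx => hx (mem_gsq_self n x)
  have hSmeas : ∀ n, MeasurableSet (S n) := by
    intro n
    have hrepr : S n = ⋃ (p : ℤ×ℤ), ⋃ (_ : gsq n p ⊆ D), gsq n p := by
      ext x
      simp only [Set.mem_iUnion, hS, Set.mem_setOf_eq]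
      constructor
      · intro h; exact ⟨gidx n x, h, mem_gsq_self n x⟩
      · rintro ⟨p, hp, hxp⟩; rw [mem_gsq.mp hxp]; exact hp
    rw [hrepr]
    exact MeasurableSet.iUnion fun p => MeasurableSet.iUnion fun _ => measurableSet_gsq n p
  have hSmono : Monotone S := by
    apply monotone_nat_of_le_succ
    intro n x hx
    exact (gsq_succ_subset n x).trans hx
  have hInterNull : volume (⋂ n, D \ S n) = 0 := by
    apply measure_mono_null ?_ hDf
    intro x hx
    simp only [Set.mem_iInter, Set.mem_diff] at hx
    have hxD : x ∈ D := (hx 0).1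
    rw [← closure_diff_interior]
    refine ⟨subset_closure hxD, fun hint => ?_⟩
    rcases Metric.isOpen_iff.mp isOpen_interior x hint with ⟨ε, hε, hball⟩
    obtain ⟨n, hn⟩ : ∃ n : ℕ, (1/2:ℝ)^n < ε := exists_pow_lt_of_lt_one hε (by norm_num)
    apply (hx n).2
    intro y hy
    apply interior_subset (hball ?_)
    rw [Metric.mem_ball]
    calc dist y x < 1/2^n := gsq_dist hy
    _ = (1/2:ℝ)^n := by rw [div_pow, one_pow]
    _ < ε := hn
  have htend : Tendsto (fun n => volume (D \ S n)) atTop (𝓝 0) := by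
    have h := tendsto_measure_iInter_atTop (μ := volume) (s := fun n => D \ S n)
      (fun n => (hDm.diff (hSmeas n)).nullMeasurableSet)
      (fun i j hij => Set.diff_subset_diff_right (hSmono hij))
      ⟨0, ne_top_of_le_ne_top hvolD (measure_mono Set.diff_subset)⟩
    rwa [hInterNull] at h
  have hmain : ∀ n : ℕ, I D ≤ lam * (volume D).toReal + 17*C*(volume (D \ S n)).toReal := by
    intro n
    obtain ⟨R, hR⟩ := hDb.subset_closedBall 0
    set B : ℤ := ⌈R * 2^n⌉ with hB
    set T : Finset (ℤ×ℤ) := Finset.Icc (-B, -B) (B, B) with hT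
    have h2 : (0:ℝ) < 2^n := by positivity
    have hTmem : ∀ p : ℤ×ℤ, gsq n p ⊆ D → p ∈ T := by
      intro p hp
      have hc := hR (hp (gsq_corner_mem n p))
      rw [Metric.mem_closedBall, dist_zero_right, Prod.norm_def, max_le_iff] at hc
      obtain ⟨hc1, hc2⟩ := hc
      rw [Real.norm_eq_abs, abs_le] at hc1 hc2
      have hbd : ∀ i : ℤ, -R ≤ (i:ℝ)/2^n → (i:ℝ)/2^n ≤ R → -B ≤ i ∧ i ≤ B := by
        intro i h1 h1'
        have k1 : (i:ℝ) ≤ R * 2^n := by rw [div_le_iff₀ h2] at h1'; linarith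
        have k2 : -(R * 2^n) ≤ (i:ℝ) := by rw [le_div_iff₀ h2] at h1; linarith
        have k3 : (i:ℝ) ≤ (B:ℝ) := k1.trans (Int.le_ceil _)
        have k4 : (-B:ℝ) ≤ (i:ℝ) := by
          have := Int.le_ceil (R * 2^n)
          push_cast
          linarith
        exact ⟨by exact_mod_cast k4, by exact_mod_cast k3⟩
      rw [hT, Finset.mem_Icc, Prod.le_def, Prod.le_def]
      obtain ⟨u1, u2⟩ := hbd p.1 hc1.1 hc1.2
      obtain ⟨v1, v2⟩ := hbd p.2 hc2.1 hc2.2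
      exact ⟨⟨u1, v1⟩, u2, v2⟩
    set g : Fin T.card → Set (ℝ×ℝ) :=
      fun k => if gsq n ((T.equivFin.symm k) : ℤ×ℤ) ⊆ D then gsq n (T.equivFin.symm k) else ∅
      with hg
    have hgsubS : ∀ p, gsq n p ⊆ D → gsq n p ⊆ S n := by
      intro p hp x hx
      show gsq n (gidx n x) ⊆ D
      rw [mem_gsq.mp hx]; exact hp
    have hgU : (⋃ k, g k) = S n := by
      apply Set.Subset.antisymm
      · intro x hx
        rcases Set.mem_iUnion.mp hx with ⟨k, hk⟩
        by_cases hc : gsq n ((T.equivFin.symm k) : ℤ×ℤ) ⊆ D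
        · rw [hg] at hk; simp only at hk; rw [if_pos hc] at hk
          exact hgsubS _ hc hk
        · rw [hg] at hk; simp only at hk; rw [if_neg hc] at hk
          exact absurd hk (Set.notMem_empty x)
      · intro x hx
        have hxD : gsq n (gidx n x) ⊆ D := hx
        refine Set.mem_iUnion.mpr ⟨T.equivFin ⟨gidx n x, hTmem _ hxD⟩, ?_⟩
        rw [hg]; simp only [Equiv.symm_apply_apply]
        rw [if_pos hxD]
        exact mem_gsq_self n x
    have hgdisj : Pairwise (Function.onFun Disjoint g) := by
      intro k l hkl
      have hne : ((T.equivFin.symm k) : ℤ×ℤ) ≠ ((T.equivFin.symm l) : ℤ×ℤ) :=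
        fun h => hkl (T.equivFin.symm.injective (Subtype.ext h))
      rw [Function.onFun, hg]
      simp only
      split_ifs <;> simp [gsq_disjoint hne]
    have hAdisj : ∀ k, Disjoint (D \ S n) (g k) := by
      intro k
      refine Disjoint.mono_right ?_ (disjoint_sdiff_left : Disjoint (D \ S n) (S n))
      rw [hg]; simp only
      split_ifs with hc
      · exact hgsubS _ hc
      · exact Set.empty_subset _
    have hU : (⋃ i, (Fin.cons (D \ S n) g : Fin (T.card+1) → Set (ℝ×ℝ)) i) = D := by
      ext x
      simp only [Set.mem_iUnion, Fin.exists_fin_succ, Fin.cons_zero, Fin.cons_succ]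
      constructor
      · rintro (h | ⟨k, hk⟩)
        · exact h.1
        · exact hSsubD n (hgU ▸ Set.mem_iUnion.mpr ⟨k, hk⟩)
      · intro hxD
        by_cases hxS : x ∈ S n
        · right
          exact Set.mem_iUnion.mp (hgU ▸ hxS)
        · exact Or.inl ⟨hxD, hxS⟩
    have hsum := hsub D (T.card+1) (Fin.cons (D \ S n) g : Fin (T.card+1) → Set (ℝ×ℝ)) hU
      (pairwise_disjoint_cons _ _ hgdisj hAdisj)
    rw [Fin.sum_univ_succ] at hsum
    simp only [Fin.cons_zero, Fin.cons_succ] at hsum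
    have hIg : ∀ k, I (g k) = lam * (volume (g k)).toReal := by
      intro k
      rw [hg]; simp only
      split_ifs with hc
      · exact I_gsq hlam hI0 hmono htrans hscale hunit hbound n _
      · rw [Inull hI0 hbound (measure_empty (μ := volume))]
        simp
    have hgmeas : ∀ k, MeasurableSet (g k) := by
      intro k
      rw [hg]; simp only
      split_ifs
      · exact measurableSet_gsq n _
      · exact MeasurableSet.empty
    have hvsum : ∑ k, volume (g k) ≤ volume D := by
      have hdis : (↑(Finset.univ : Finset (Fin T.card)) : Set (Fin T.card)).PairwiseDisjoint g :=
        fun a _ b _ hab => hgdisj hab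
      rw [← measure_biUnion_finset hdis (fun k _ => hgmeas k)]
      apply measure_mono
      intro x hx
      simp only [Set.mem_iUnion, Finset.mem_coe, Finset.mem_univ, exists_prop, true_and] at hx
      rcases hx with ⟨k, hk⟩
      exact hSsubD n (hgU ▸ Set.mem_iUnion.mpr ⟨k, hk⟩)
    have hvne : ∀ k ∈ (Finset.univ : Finset (Fin T.card)), volume (g k) ≠ ⊤ := by
      intro k _
      exact ne_top_of_le_ne_top hvolD (measure_mono ((Set.subset_iUnion g k).trans (hgU ▸ hSsubD n)))
    have hsum2 : ∑ k, I (g k) ≤ lam * (volume D).toReal := by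
      calc ∑ k, I (g k) = ∑ k, lam * (volume (g k)).toReal := by
            exact Finset.sum_congr rfl fun k _ => hIg k
      _ = lam * ∑ k, (volume (g k)).toReal := by rw [Finset.mul_sum]
      _ = lam * (∑ k, volume (g k)).toReal := by rw [ENNReal.toReal_sum hvne]
      _ ≤ lam * (volume D).toReal := by
            apply mul_le_mul_of_nonneg_left (ENNReal.toReal_mono hvolD hvsum) hlam.le
    have hrest : I (D \ S n) ≤ 17*C*(volume (D \ S n)).toReal := hbound _
    linarith
  refine le_of_forall_pos_le_add fun η hη => ?_
  have hpos : (0:ENNReal) < ENNReal.ofReal (η / (17*C)) := by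
    rw [ENNReal.ofReal_pos]; positivity
  obtain ⟨n, hn⟩ := (htend.eventually_lt_const hpos).exists
  have hne : volume (D \ S n) ≠ ⊤ := ne_top_of_le_ne_top hvolD (measure_mono Set.diff_subset)
  have h1 : (volume (D \ S n)).toReal < η / (17*C) := by
    rwa [← ENNReal.lt_ofReal_iff_toReal_lt hne]
  have h2 : 17*C*(volume (D \ S n)).toReal ≤ η := by
    rw [lt_div_iff₀ hc17] at h1
    nlinarith [h1]
  linarith [hmain n]

end AuxAreaFunctional

/-- An infimal-area-type functional `I` on regions of the plane which is
nonnegative, finitely subadditive over decompositions, monotone in the sense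
`I(D₁) ≤ I(D) + I(D₁ \ D)`, translation invariant, scales quadratically, takes the value
`λ` on the unit square, and satisfies a linear area bound `I(D) ≤ 17·C·Area(D)`, must equal
`λ·Area(D)` on every bounded region `D` with negligible (piecewise smooth) boundary. -/
theorem area_functional_is_proportional (lam C : ℝ) (hlam : 0 < lam)
    (I : Set (ℝ × ℝ) → ℝ)
    (hI0 : ∀ D, 0 ≤ I D)
    (hsub : ∀ (D : Set (ℝ × ℝ)) (m : ℕ) (f : Fin m → Set (ℝ × ℝ)),
      (⋃ i, f i) = D → Pairwise (Function.onFun Disjoint f) → I D ≤ ∑ i, I (f i))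
    (hmono : ∀ D D₁ : Set (ℝ × ℝ), D ⊆ D₁ → I D₁ ≤ I D + I (D₁ \ D))
    (htrans : ∀ (D : Set (ℝ × ℝ)) (v : ℝ × ℝ), I ((fun p => p + v) '' D) = I D)
    (hscale : ∀ (D : Set (ℝ × ℝ)) (r : ℝ), 0 < r → I ((fun p => r • p) '' D) = r ^ 2 * I D)
    (hunit : I (Set.Icc (0:ℝ) 1 ×ˢ Set.Icc (0:ℝ) 1) = lam)
    (hbound : ∀ D : Set (ℝ × ℝ), I D ≤ 17 * C * (volume D).toReal) :
    ∀ D : Set (ℝ × ℝ), Bornology.IsBounded D → MeasurableSet D →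
      volume (frontier D) = 0 → I D = lam * (volume D).toReal := by
  intro D hDb hDm hDf
  have hupp := Iupper lam C I hlam hI0 hsub hmono htrans hscale hunit hbound
  have hvolD : volume D ≠ ⊤ := hDb.measure_lt_top.ne
  refine le_antisymm (hupp D hDb hDm hDf) ?_
  obtain ⟨R0, hR0⟩ := hDb.subset_closedBall 0
  set R : ℝ := max R0 1 with hRdef
  have hR1 : (0:ℝ) < R := lt_of_lt_of_le one_pos (le_max_right _ _)
  have hDK : D ⊆ Set.Icc (-R) R ×ˢ Set.Icc (-R) R := by
    intro x hx
    have h := hR0 hx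
    rw [Metric.mem_closedBall, dist_zero_right, Prod.norm_def] at h
    have h' : max ‖x.1‖ ‖x.2‖ ≤ R := h.trans (le_max_left _ _)
    rw [max_le_iff, Real.norm_eq_abs, Real.norm_eq_abs, abs_le, abs_le] at h'
    exact ⟨⟨h'.1.1, h'.1.2⟩, h'.2.1, h'.2.2⟩
  have hKmeas : MeasurableSet (Set.Icc (-R) R ×ˢ Set.Icc (-R) R) :=
    measurableSet_Icc.prod measurableSet_Icc
  have hKb : Bornology.IsBounded (Set.Icc (-R) R ×ˢ Set.Icc (-R) R) :=
    (Metric.isBounded_Icc _ _).prod (Metric.isBounded_Icc _ _)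
  have hIK : I (Set.Icc (-R) R ×ˢ Set.Icc (-R) R) = (2*R)^2 * lam := by
    have h := I_closed_sq htrans hscale hunit (-R) (-R) (2*R) (by linarith)
    rw [show -R + 2*R = R by ring] at h
    exact h
  have hvolK : volume (Set.Icc (-R) R ×ˢ Set.Icc (-R) R) = ENNReal.ofReal ((2*R)^2) := by
    have h := vol_Icc_sq (-R) (-R) (2*R) (by linarith)
    rw [show -R + 2*R = R by ring] at h
    exact h
  have hvolKne : volume (Set.Icc (-R) R ×ˢ Set.Icc (-R) R) ≠ ⊤ := by
    rw [hvolK]; exact ENNReal.ofReal_ne_top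
  have hfrK : volume (frontier (Set.Icc (-R) R ×ˢ Set.Icc (-R) R)) = 0 := by
    have hcl : IsClosed (Set.Icc (-R) R ×ˢ Set.Icc (-R) R) := isClosed_Icc.prod isClosed_Icc
    have hfr : frontier (Set.Icc (-R) R ×ˢ Set.Icc (-R) R) =
        (Set.Icc (-R) R ×ˢ Set.Icc (-R) R) \ (Set.Ioo (-R) R ×ˢ Set.Ioo (-R) R) := by
      rw [← closure_diff_interior, hcl.closure_eq, interior_prod_eq, interior_Icc]
    have hvolI : volume (Set.Ioo (-R) R ×ˢ Set.Ioo (-R) R) = ENNReal.ofReal ((2*R)^2) := by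
      rw [Measure.volume_eq_prod, Measure.prod_prod, Real.volume_Ioo,
        ← ENNReal.ofReal_mul (by linarith), show R - -R = 2*R by ring]
      congr 1; ring
    rw [hfr, measure_diff (Set.prod_mono Set.Ioo_subset_Icc_self Set.Ioo_subset_Icc_self)
      ((measurableSet_Ioo.prod measurableSet_Ioo).nullMeasurableSet)
      (by rw [hvolI]; exact ENNReal.ofReal_ne_top), hvolK, hvolI, tsub_self]
  have hfrKD : volume (frontier ((Set.Icc (-R) R ×ˢ Set.Icc (-R) R) \ D)) = 0 := by
    refine measure_mono_null (t := frontier (Set.Icc (-R) R ×ˢ Set.Icc (-R) R) ∪ frontier D)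
      ?_ (measure_union_null hfrK hDf)
    rw [Set.diff_eq]
    refine (frontier_inter_subset _ _).trans ?_
    intro x hx
    rcases hx with h | h
    · exact Or.inl h.1
    · rw [frontier_compl] at h; exact Or.inr h.2
  have hup2 := hupp ((Set.Icc (-R) R ×ˢ Set.Icc (-R) R) \ D)
    (hKb.subset Set.diff_subset) (hKmeas.diff hDm) hfrKD
  have hvKD : volume ((Set.Icc (-R) R ×ˢ Set.Icc (-R) R) \ D) =
      volume (Set.Icc (-R) R ×ˢ Set.Icc (-R) R) - volume D :=
    measure_diff hDK hDm.nullMeasurableSet hvolD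
  have htr : (volume ((Set.Icc (-R) R ×ˢ Set.Icc (-R) R) \ D)).toReal =
      (volume (Set.Icc (-R) R ×ˢ Set.Icc (-R) R)).toReal - (volume D).toReal := by
    rw [hvKD, ENNReal.toReal_sub_of_le (measure_mono hDK) hvolKne]
  have hKtr : (volume (Set.Icc (-R) R ×ˢ Set.Icc (-R) R)).toReal = (2*R)^2 := by
    rw [hvolK, ENNReal.toReal_ofReal (by positivity)]
  have hm := hmono D _ hDK
  rw [hIK] at hm
  rw [htr, hKtr] at hup2
  nlinarith [hup2, hm, hKtr]
end

section
/- Let F(t,s) = (cos(s)·e^{it}, (sin(s)/√2)·e^{2it}) restricted to [0,2π] × [0,π/2] with identifications (0,s) ~ (2π,s) and (t, π/2) ~ (t+π, π/2). Then F descends to an injective map on the quotient (a Möbius band), i.e., F(t,π/2) = F(t+π, π/2) for all t, F(0,s) = F(2π,s) for all s, and F(t,s) = F(t',s') with (t,s),(t',s') in [0,2π)×[0,π/2] implies (t,s) = (t',s') or s = s' = π/2 with t' = t ± π. -/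
open Real Complex

lemma exp_I_inj {a b : ℝ} (h : Complex.exp (a*Complex.I) = Complex.exp (b*Complex.I)) :
    ∃ n : ℤ, a = b + n * (2*π) := by
  rw [Complex.exp_eq_exp_iff_exists_int] at h
  obtain ⟨n, hn⟩ := h
  refine ⟨n, ?_⟩
  have := congrArg Complex.im hn
  simpa using this

lemma int_small {n : ℤ} {c : ℝ} (hc : 0 < c) (h1 : -(2*c) < (n:ℝ)*c) (h2 : (n:ℝ)*c < 2*c) :
    n = -1 ∨ n = 0 ∨ n = 1 := by
  have l1 : (-2 : ℝ) < (n:ℝ) := by nlinarith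
  have l2 : (n:ℝ) < 2 := by nlinarith
  have i1 : (-2 : ℤ) < n := by exact_mod_cast l1
  have i2 : n < 2 := by exact_mod_cast l2
  omega

/-- The map `F(t,s) = (cos s · e^{it}, (sin s/√2) · e^{2it})` on
`[0,2π] × [0,π/2]` respects the Möbius-band identifications `(0,s) ~ (2π,s)`,
`(t,π/2) ~ (t+π,π/2)`, and is otherwise injective: it descends to an injective map on
the quotient Möbius band. -/
theorem Fmob_descends_injectively :
    (∀ t : ℝ, Fmob t (π / 2) = Fmob (t + π) (π / 2)) ∧
    (∀ s : ℝ, Fmob 0 s = Fmob (2 * π) s) ∧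
    (∀ t t' s s' : ℝ, t ∈ Set.Ico (0:ℝ) (2 * π) → t' ∈ Set.Ico (0:ℝ) (2 * π) →
      s ∈ Set.Icc (0:ℝ) (π / 2) → s' ∈ Set.Icc (0:ℝ) (π / 2) →
      Fmob t s = Fmob t' s' →
      (t = t' ∧ s = s') ∨ (s = π / 2 ∧ s' = π / 2 ∧ (t' = t + π ∨ t' = t - π))) := by
  refine ⟨?_, ?_, ?_⟩
  · intro t
    simp only [Fmob, Real.cos_pi_div_two, Real.sin_pi_div_two, Prod.mk.injEq]
    constructor
    · push_cast; ring
    · congr 1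
      rw [Complex.exp_eq_exp_iff_exists_int]
      exact ⟨-1, by push_cast; ring⟩
  · intro s
    simp only [Fmob, Prod.mk.injEq]
    constructor
    · congr 1
      rw [Complex.exp_eq_exp_iff_exists_int]
      exact ⟨-1, by push_cast; ring⟩
    · congr 1
      rw [Complex.exp_eq_exp_iff_exists_int]
      exact ⟨-2, by push_cast; ring⟩
  · intro t t' s s' ht ht' hs hs' hF
    have hπ := Real.pi_pos
    obtain ⟨h1, h2⟩ := Prod.mk.injEq .. ▸ hF
    have habs := congrArg (‖·‖) h1
    simp only [norm_mul, Complex.norm_exp_ofReal_mul_I, Complex.norm_real, Real.norm_eq_abs, mul_one] at habs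
    have hcs : Real.cos s = Real.cos s' := by
      rwa [_root_.abs_of_nonneg (Real.cos_nonneg_of_mem_Icc ⟨by linarith [hs.1], hs.2⟩),
        _root_.abs_of_nonneg (Real.cos_nonneg_of_mem_Icc ⟨by linarith [hs'.1], hs'.2⟩)] at habs
    have hss : s = s' :=
      Real.injOn_cos ⟨hs.1, by linarith [hs.2]⟩ ⟨hs'.1, by linarith [hs'.2]⟩ hcs
    subst hss
    have hb1 : -(2*π) < t - t' := by linarith [ht.1, ht'.2]
    have hb2 : t - t' < 2*π := by linarith [ht.2, ht'.1]
    by_cases hc : Real.cos s = 0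
    · -- here necessarily `s = π/2`
      have hspi : s = π / 2 := by
        rcases Real.cos_eq_zero_iff.mp hc with ⟨n, hn⟩
        have l1 : (-1:ℝ) < n := by nlinarith [hs.1]
        have l2 : (n:ℝ) < 1 := by nlinarith [hs.2]
        have i1 : (-1:ℤ) < n := by exact_mod_cast l1
        have i2 : n < 1 := by exact_mod_cast l2
        have : n = 0 := by omega
        subst this
        push_cast at hn
        linarith
      subst hspi
      rw [Real.sin_pi_div_two] at h2
      have hne : ((1 / Real.sqrt 2 : ℝ) : ℂ) ≠ 0 := by
        simp [Real.sqrt_eq_zero', show ¬ (2:ℝ) ≤ 0 by norm_num]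
      have h2' : Complex.exp (((2*t : ℝ) : ℂ) * Complex.I)
          = Complex.exp (((2*t' : ℝ) : ℂ) * Complex.I) := by
        push_cast
        exact mul_left_cancel₀ hne h2
      obtain ⟨n, hn⟩ := exp_I_inj h2'
      have hn' : (n:ℝ) * π = (t - t') / 1 := by field_simp; linarith
      rcases int_small hπ (by nlinarith) (by nlinarith) with h | h | h
      · subst h
        right
        refine ⟨rfl, rfl, Or.inl ?_⟩
        push_cast at hn'
        linarith
      · subst h
        push_cast at hn'
        exact Or.inl ⟨by linarith, rfl⟩
      · subst h
        right
        refine ⟨rfl, rfl, Or.inr ?_⟩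
        push_cast at hn'
        linarith
    · have h1' : Complex.exp (t * Complex.I) = Complex.exp (t' * Complex.I) := by
        have hne : (Real.cos s : ℂ) ≠ 0 := by exact_mod_cast hc
        exact mul_left_cancel₀ hne h1
      obtain ⟨n, hn⟩ := exp_I_inj h1'
      rcases int_small hπ (by nlinarith) (by nlinarith) with h | h | h
      · exfalso
        subst h
        push_cast at hn
        linarith [ht.1, ht'.2]
      · subst h
        push_cast at hn
        exact Or.inl ⟨by linarith, rfl⟩
      · exfalso
        subst h
        push_cast at hn
        linarith [ht.2, ht'.1]
end

section
/- Let σ = 3 dt and define its Hodge star on the surface F(t,s) = (cos(s)·e^{it}, (sin(s)/√2)·e^{2it}) using the induced metric (where F_t ⊥ F_s and |F_t| = √2|F_s|). Then ∗σ = (3/√2) ds, which is a closed 1-form; hence the surface is Hamiltonian stationary. -/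
open Real Complex

lemma hasDerivAt_exp_mul_I (c t : ℝ) :
    HasDerivAt (fun t' : ℝ => Complex.exp ((c : ℂ) * t' * Complex.I))
      ((c : ℂ) * Complex.I * Complex.exp ((c : ℂ) * t * Complex.I)) t := by
  have h1 : HasDerivAt (fun t' : ℝ => ((c : ℂ) * t' * Complex.I)) ((c:ℂ) * Complex.I) t := by
    have := (Complex.ofRealCLM.hasDerivAt (x := t)).const_mul (c : ℂ)
    simpa [mul_comm, mul_assoc, mul_left_comm] using this.mul_const Complex.I
  simpa [mul_comm, Function.comp_def] using (Complex.hasDerivAt_exp _).comp t h1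

/-- On the surface `F(t,s) = (cos s · e^{it}, (sin s/√2) · e^{2it})`, with
`F_t ⊥ F_s`, the Hodge star of the mean curvature form `σ = 3 dt` is
`∗σ = 3·(|F_s|/|F_t|) ds = (3/√2) ds`: the coefficient `3|F_s|/|F_t|` is the constant
`3/√2`, so `∗σ` is a closed 1-form and the surface is Hamiltonian stationary. -/
theorem Fmob_hamiltonian_stationary (t s : ℝ) :
    3 * Real.sqrt ((hermC2 (FmobS t s) (FmobS t s)).re)
        / Real.sqrt ((hermC2 (FmobT t s) (FmobT t s)).re)
      = 3 / Real.sqrt 2 := by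
  rw [FmobT_eq, FmobS_eq]
  have he1 : Complex.normSq (Complex.exp (t * Complex.I)) = 1 := by
    simpa [Complex.normSq_eq_norm_sq, Complex.norm_exp] using (by norm_num : ((1:ℝ))^2 = 1)
  have he2 : Complex.normSq (Complex.exp (2 * t * Complex.I)) = 1 := by
    simp [Complex.normSq_eq_norm_sq, Complex.norm_exp]
  simp only [hermC2]
  have key : ∀ u v : ℂ, ((starRingEnd ℂ u * u + starRingEnd ℂ v * v)).re
      = Complex.normSq u + Complex.normSq v := fun u v => by
    simp [← Complex.normSq_eq_conj_mul_self]
  rw [key, key]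
  have hS : Complex.normSq ((-Real.sin s : ℂ) * Complex.exp (t*Complex.I))
      + Complex.normSq (((Real.cos s / Real.sqrt 2 : ℝ) : ℂ) * Complex.exp (2*t*Complex.I))
      = (1 + Real.sin s ^ 2) / 2 := by
    simp only [Complex.normSq_mul, he1, he2, Complex.normSq_ofReal, mul_one, neg_mul,
      Complex.normSq_neg, div_pow, Real.sq_sqrt (by norm_num : (0:ℝ) ≤ 2)]
    rw [div_mul_div_comm, Real.mul_self_sqrt (by norm_num : (0:ℝ) ≤ 2)]
    nlinarith [Real.sin_sq_add_cos_sq s]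
  have hT : Complex.normSq ((Real.cos s : ℂ) * (Complex.I * Complex.exp (t*Complex.I)))
      + Complex.normSq (((Real.sin s / Real.sqrt 2 : ℝ) : ℂ) * (2 * Complex.I * Complex.exp (2*t*Complex.I)))
      = 1 + Real.sin s ^ 2 := by
    simp only [Complex.normSq_mul, he1, he2, Complex.normSq_ofReal, mul_one, Complex.normSq_I,
      Complex.normSq_ofNat]
    rw [div_mul_div_comm, Real.mul_self_sqrt (by norm_num : (0:ℝ) ≤ 2)]
    nlinarith [Real.sin_sq_add_cos_sq s]
  rw [hS, hT]
  have hA : (0:ℝ) < 1 + Real.sin s ^ 2 := by positivity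
  rw [Real.sqrt_div hA.le, mul_div_assoc, div_div, mul_comm (Real.sqrt 2), ← div_div,
    div_self (Real.sqrt_ne_zero'.mpr hA)]
  ring
end
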